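/- (Khintchine's theorem, convergence case.) Let n ≥ 1 and let ψ₁, …, ψ_n : ℕ → (0,∞) be approximating functions. If Σ_{h=1}^∞ ψ₁(h)⋯ψ_n(h) < ∞, then the set S_n(ψ₁,…,ψ_n) has n-dimensional Lebesgue measure zero, i.e. |S_n(ψ₁,…,ψ_n) ∩ [0,1]^n| = 0. -/
import Mathlib


open MeasureTheory Filter
open scoped ENNReal NNReal

/-- Distance from `x` to the nearest integer, `‖x‖ = min_{z ∈ ℤ} |x - z|`. -/
noncomputable def nint (x : ℝ) : ℝ := ⨅ z : ℤ, |x - (z : ℝ)|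

/-- `S_n(ψ₁, …, ψ_n)`: points `x ∈ ℝⁿ` with `‖q xᵢ‖ < ψᵢ(q)` for every `i`, for
infinitely many `q ∈ ℕ`. -/
def Sn (n : ℕ) (ψ : Fin n → ℕ → ℝ) : Set (Fin n → ℝ) :=
  { x | {q : ℕ | 0 < q ∧ ∀ i, nint (q * x i) < ψ i q}.Infinite }

lemma onedim (q : ℕ) (hq : 1 ≤ q) (ε : ℝ) (hε : 0 < ε) :
    volume {t : ℝ | t ∈ Set.Icc (0:ℝ) 1 ∧ nint (q * t) < ε} ≤ ENNReal.ofReal (4 * ε) := by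
  rcases le_or_gt (1/4 : ℝ) ε with h | h
  · calc volume {t : ℝ | t ∈ Set.Icc (0:ℝ) 1 ∧ nint (q * t) < ε}
        ≤ volume (Set.Icc (0:ℝ) 1) := measure_mono (fun t ht => ht.1)
      _ = 1 := by simp
      _ ≤ ENNReal.ofReal (4*ε) := by
          rw [show (1:ℝ≥0∞) = ENNReal.ofReal 1 by simp]
          exact ENNReal.ofReal_le_ofReal (by linarith)
  · have hq0 : (0:ℝ) < (q:ℝ) := by exact_mod_cast hq
    have hsub : {t : ℝ | t ∈ Set.Icc (0:ℝ) 1 ∧ nint (q*t) < ε} ⊆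
        ⋃ a ∈ Finset.range (q+1), Set.Ioo (((a:ℝ) - ε)/q) (((a:ℝ) + ε)/q) := by
      rintro t ⟨⟨ht0, ht1⟩, hnint⟩
      obtain ⟨z, hz⟩ := exists_lt_of_ciInf_lt hnint
      rw [abs_lt] at hz
      have hqt0 : (0:ℝ) ≤ q * t := mul_nonneg hq0.le ht0
      have hqt1 : (q:ℝ) * t ≤ q := by nlinarith
      have hz0 : (0:ℤ) ≤ z := by
        by_contra hc
        push_neg at hc
        have hz1 : z ≤ -1 := by omega
        have : (z:ℝ) ≤ -1 := by exact_mod_cast hz1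
        linarith [hz.2]
      have hzq : z ≤ (q:ℤ) := by
        by_contra hc
        push_neg at hc
        have : ((q:ℤ):ℝ) + 1 ≤ (z:ℝ) := by exact_mod_cast hc
        push_cast at this
        linarith [hz.1]
      refine Set.mem_biUnion (show z.toNat ∈ Finset.range (q+1) by
        simp only [Finset.mem_range]; omega) ?_
      · have hcast : ((z.toNat : ℕ) : ℝ) = (z : ℝ) := by
          exact_mod_cast Int.toNat_of_nonneg hz0
        constructor
        · rw [div_lt_iff₀ hq0, hcast]
          linarith [hz.1]
        · rw [lt_div_iff₀ hq0, hcast]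
          linarith [hz.2]
    calc volume {t : ℝ | t ∈ Set.Icc (0:ℝ) 1 ∧ nint (q*t) < ε}
        ≤ volume (⋃ a ∈ Finset.range (q+1),
            Set.Ioo (((a:ℝ) - ε)/q) (((a:ℝ) + ε)/q)) := measure_mono hsub
      _ ≤ ∑ a ∈ Finset.range (q+1),
            volume (Set.Ioo (((a:ℝ) - ε)/q) (((a:ℝ) + ε)/q)) := measure_biUnion_finset_le _ _
      _ = ∑ a ∈ Finset.range (q+1), ENNReal.ofReal (2 * ε / q) := by
          refine Finset.sum_congr rfl fun a _ => ?_
          rw [Real.volume_Ioo]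
          congr 1
          field_simp
          ring
      _ = (q+1 : ℕ) * ENNReal.ofReal (2 * ε / q) := by
          rw [Finset.sum_const, Finset.card_range, nsmul_eq_mul]
      _ = ENNReal.ofReal ((q+1 : ℕ) * (2 * ε / q)) := by
          rw [ENNReal.ofReal_mul (by positivity), ENNReal.ofReal_natCast]
      _ ≤ ENNReal.ofReal (4 * ε) := by
          apply ENNReal.ofReal_le_ofReal
          have hq1 : ((q:ℝ) + 1) ≤ 2 * q := by
            have : (1:ℝ) ≤ q := by exact_mod_cast hq
            linarith
          push_cast
          rw [mul_comm, div_mul_eq_mul_div, div_le_iff₀ hq0]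
          nlinarith
      
set_option maxHeartbeats 1000000 in
/-- **Khintchine's theorem, convergence case**: if `Σ_h ψ₁(h) ⋯ ψ_n(h) < ∞` then
`S_n(ψ₁, …, ψ_n)` has `n`-dimensional Lebesgue measure zero in `[0,1]ⁿ`. -/
theorem khintchine_convergence (n : ℕ) (hn : 1 ≤ n) (ψ : Fin n → ℕ → ℝ)
    (hpos : ∀ i q, 0 < ψ i q) (hdec : ∀ i, Antitone (ψ i))
    (hsum : Summable (fun h : ℕ => ∏ i, ψ i h)) :
    volume (Sn n ψ ∩ Set.univ.pi fun _ => Set.Icc (0 : ℝ) 1) = 0 := by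
  set A : ℕ → Set (Fin n → ℝ) := fun q =>
    Set.univ.pi (fun i => {t : ℝ | t ∈ Set.Icc (0:ℝ) 1 ∧ nint (q * t) < ψ i q}) with hA_def
  -- each x in the set belongs to limsup A
  have hsub : Sn n ψ ∩ (Set.univ.pi fun _ => Set.Icc (0 : ℝ) 1) ⊆ limsup A atTop := by
    rintro x ⟨hx, hbox⟩
    rw [mem_limsup_iff_frequently_mem]
    have hfreq : ∃ᶠ q in Filter.cofinite, q ∈
        {q : ℕ | 0 < q ∧ ∀ i, nint (q * x i) < ψ i q} :=
      Set.infinite_iff_frequently_cofinite.mp hx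
    rw [Nat.cofinite_eq_atTop] at hfreq
    refine hfreq.mono ?_
    rintro q ⟨hq0, hq⟩
    intro i _
    exact ⟨hbox i (Set.mem_univ i), hq i⟩
  -- measure bound for A q, q ≥ 1
  have hAq : ∀ q : ℕ, 1 ≤ q → volume (A q) ≤ ENNReal.ofReal (4^n * ∏ i, ψ i q) := by
    intro q hq
    rw [hA_def]
    rw [volume_pi_pi]
    calc (∏ i, volume {t : ℝ | t ∈ Set.Icc (0:ℝ) 1 ∧ nint (q * t) < ψ i q})
        ≤ ∏ i, ENNReal.ofReal (4 * ψ i q) :=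
          Finset.prod_le_prod' fun i _ => onedim q hq (ψ i q) (hpos i q)
      _ = ENNReal.ofReal (∏ i, (4 * ψ i q)) := by
          rw [ENNReal.ofReal_prod_of_nonneg]
          exact fun i _ => mul_nonneg (by norm_num) (hpos i q).le
      _ = ENNReal.ofReal (4^n * ∏ i, ψ i q) := by
          congr 1
          rw [Finset.prod_mul_distrib, Finset.prod_const, Finset.card_univ, Fintype.card_fin]
  -- sum of measures is finite
  have htsum : ∑' q, volume (A q) ≠ ⊤ := by
    have hshift : Summable (fun q : ℕ => 4^n * ∏ i, ψ i (q+1)) :=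
      ((summable_nat_add_iff 1).mpr hsum).mul_left _
    have h1 : ∑' q, volume (A q) = volume (A 0) + ∑' q, volume (A (q+1)) :=
      tsum_eq_zero_add' ENNReal.summable
    rw [h1]
    have hA0 : volume (A 0) ≤ 1 := by
      calc volume (A 0) ≤ volume (Set.univ.pi fun _ : Fin n => Set.Icc (0:ℝ) 1) := by
            apply measure_mono
            intro x hx i hi
            exact (hx i hi).1
        _ = 1 := by rw [volume_pi_pi]; simp
    have h2 : ∑' q, volume (A (q+1)) ≤ ENNReal.ofReal (∑' q, 4^n * ∏ i, ψ i (q+1)) := by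
      rw [ENNReal.ofReal_tsum_of_nonneg (fun q => mul_nonneg (by positivity) (Finset.prod_nonneg fun i _ => (hpos i _).le)) hshift]
      exact ENNReal.tsum_le_tsum fun q => hAq (q+1) (Nat.succ_le_succ (Nat.zero_le q))
    intro hcontra
    have : (1 : ℝ≥0∞) + ENNReal.ofReal (∑' q, 4^n * ∏ i, ψ i (q+1)) = ⊤ := by
      refine eq_top_iff.mpr ?_
      rw [← hcontra]
      exact add_le_add hA0 h2
    simp [ENNReal.add_eq_top, ENNReal.ofReal_ne_top] at this
  exact measure_mono_null hsub (measure_limsup_atTop_eq_zero htsum)
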